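/- arXiv:0711.0165 — 4 statements merged into one kernel-verified Lean document; each statement's English description precedes it below -/
import Mathlib

section
/- Let Q be a quiver with vertex involution φ and arrow involution φ satisfying h(φ(a)) = φ(t(a)), and sign maps ε : Q₀ → {±1}, σ : Q₁ → {±1}. Define * on the path algebra ℂQ by v* = φ(v) for vertices and a* = σ_a ε_{h(a)} φ(a) for arrows, extended as an anti-homomorphism. If ε_v ε_{φ(v)} = 1 and σ_a σ_{φ(a)} = 1 for all v, a, then * is a well-defined anti-automorphism of ℂQ satisfying x** = ε x ε for all x ∈ ℂQ, where ε = Σ_v ε_v v. -/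
/-!
On generators, `*` respects the defining relations of `ℂQ` once it is read in the opposite
algebra (this is where `hd ∘ φA = φV ∘ tl` enters), so it extends to an algebra map
`ℂQ → ℂQᵐᵒᵖ`, i.e. a linear anti-endomorphism of `ℂQ`. Both `x ↦ x**` and `x ↦ ε x ε` are
multiplicative (the latter because `ε² = 1`), and the sign conditions make them agree on vertices
and arrows, hence everywhere. Conjugation by `ε` is an involution, so `**` and with it `*` are
bijective.
-/

open scoped BigOperators

/-- The defining relations of the path algebra of a quiver with vertex set `V₀`,
arrow set `Q₁`, and head/tail maps `hd, tl`: the vertices are orthogonal idempotents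
summing to `1`, and each arrow `a` satisfies `e_{hd a} · a = a = a · e_{tl a}`. -/
inductive PathAlgebraRel (V₀ Q₁ : Type) [Fintype V₀] (hd tl : Q₁ → V₀) :
    FreeAlgebra ℂ (V₀ ⊕ Q₁) → FreeAlgebra ℂ (V₀ ⊕ Q₁) → Prop
  | idem (v : V₀) : PathAlgebraRel V₀ Q₁ hd tl
      (FreeAlgebra.ι ℂ (Sum.inl v) * FreeAlgebra.ι ℂ (Sum.inl v))
      (FreeAlgebra.ι ℂ (Sum.inl v))
  | orth (v w : V₀) (h : v ≠ w) : PathAlgebraRel V₀ Q₁ hd tl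
      (FreeAlgebra.ι ℂ (Sum.inl v) * FreeAlgebra.ι ℂ (Sum.inl w)) 0
  | sum_one : PathAlgebraRel V₀ Q₁ hd tl
      (∑ v : V₀, FreeAlgebra.ι ℂ (Sum.inl v)) 1
  | head (a : Q₁) : PathAlgebraRel V₀ Q₁ hd tl
      (FreeAlgebra.ι ℂ (Sum.inl (hd a)) * FreeAlgebra.ι ℂ (Sum.inr a))
      (FreeAlgebra.ι ℂ (Sum.inr a))
  | tail (a : Q₁) : PathAlgebraRel V₀ Q₁ hd tl
      (FreeAlgebra.ι ℂ (Sum.inr a) * FreeAlgebra.ι ℂ (Sum.inl (tl a)))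
      (FreeAlgebra.ι ℂ (Sum.inr a))

/-- The path algebra `ℂQ` of a quiver, presented by generators and relations. -/
def PathAlgebra (V₀ Q₁ : Type) [Fintype V₀] (hd tl : Q₁ → V₀) : Type :=
  RingQuot (PathAlgebraRel V₀ Q₁ hd tl)

noncomputable instance (V₀ Q₁ : Type) [Fintype V₀] (hd tl : Q₁ → V₀) :
    Ring (PathAlgebra V₀ Q₁ hd tl) := by unfold PathAlgebra; infer_instance

noncomputable instance (V₀ Q₁ : Type) [Fintype V₀] (hd tl : Q₁ → V₀) :
    Algebra ℂ (PathAlgebra V₀ Q₁ hd tl) := by unfold PathAlgebra; infer_instance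

/-- The image of a vertex idempotent in the path algebra. -/
noncomputable def PathAlgebra.vertex (V₀ Q₁ : Type) [Fintype V₀] (hd tl : Q₁ → V₀)
    (v : V₀) : PathAlgebra V₀ Q₁ hd tl :=
  RingQuot.mkAlgHom ℂ (PathAlgebraRel V₀ Q₁ hd tl) (FreeAlgebra.ι ℂ (Sum.inl v))

/-- The image of an arrow in the path algebra. -/
noncomputable def PathAlgebra.arrow (V₀ Q₁ : Type) [Fintype V₀] (hd tl : Q₁ → V₀)
    (a : Q₁) : PathAlgebra V₀ Q₁ hd tl :=
  RingQuot.mkAlgHom ℂ (PathAlgebraRel V₀ Q₁ hd tl) (FreeAlgebra.ι ℂ (Sum.inr a))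

section Idempotents

open MulOpposite

variable {K A I : Type*} [CommSemiring K] [Semiring A] [Algebra K A] {e : I → A}

theorem CompleteOrthogonalIdempotents.op [Fintype I] (he : CompleteOrthogonalIdempotents e) :
    CompleteOrthogonalIdempotents (fun i ↦ op (e i)) where
  idem i := congrArg MulOpposite.op (he.idem i).eq
  ortho _ _ hij := congrArg MulOpposite.op (he.ortho hij.symm)
  complete := by rw [← Finset.op_sum, he.complete, op_one]

theorem OrthogonalIdempotents.sum_smul_mul_of_mul_eq [Fintype I] (he : OrthogonalIdempotents e)
    (c : I → K) {i : I} {x : A} (hx : e i * x = x) : (∑ j, c j • e j) * x = c i • x := by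
  classical
  rw [Finset.sum_mul, Finset.sum_eq_single i (fun j _ hj ↦ by
    rw [smul_mul_assoc, ← hx, ← mul_assoc, he.ortho hj, zero_mul, smul_zero]) (by simp),
    smul_mul_assoc, hx]

theorem OrthogonalIdempotents.mul_sum_smul_of_mul_eq [Fintype I] (he : OrthogonalIdempotents e)
    (c : I → K) {i : I} {x : A} (hx : x * e i = x) : x * (∑ j, c j • e j) = c i • x := by
  classical
  rw [Finset.mul_sum, Finset.sum_eq_single i (fun j _ hj ↦ by
    rw [mul_smul_comm, ← hx, mul_assoc, he.ortho hj.symm, mul_zero, smul_zero]) (by simp),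
    mul_smul_comm, hx]

theorem CompleteOrthogonalIdempotents.sum_smul_mul_self [Fintype I]
    (he : CompleteOrthogonalIdempotents e) {c : I → K} (hc : ∀ i, c i * c i = 1) :
    (∑ i, c i • e i) * (∑ i, c i • e i) = 1 := by
  rw [Finset.mul_sum, ← he.complete]
  refine Finset.sum_congr rfl fun i _ ↦ ?_
  rw [mul_smul_comm, he.sum_smul_mul_of_mul_eq c (he.idem i).eq, smul_smul, hc, one_smul]

end Idempotents

theorem involutive_mul_mul_of_mul_self_eq_one {M : Type*} [Monoid M] {u : M} (hu : u * u = 1) :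
    Function.Involutive (fun x ↦ u * x * u) := fun x ↦ by
  simp only [← mul_assoc]
  rw [hu, one_mul, mul_assoc, hu, mul_one]

namespace PathAlgebra

variable {V₀ Q₁ : Type} [Fintype V₀] {hd tl : Q₁ → V₀}

theorem completeOrthogonalIdempotents_vertex :
    CompleteOrthogonalIdempotents (vertex V₀ Q₁ hd tl) where
  idem v := by
    have h := RingQuot.mkAlgHom_rel ℂ (PathAlgebraRel.idem (hd := hd) (tl := tl) v)
    rwa [map_mul] at h
  ortho v w hvw := by
    have h := RingQuot.mkAlgHom_rel ℂ (PathAlgebraRel.orth (hd := hd) (tl := tl) v w hvw)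
    rwa [map_mul, map_zero] at h
  complete := by
    have h := RingQuot.mkAlgHom_rel ℂ (PathAlgebraRel.sum_one (V₀ := V₀) (hd := hd) (tl := tl))
    rwa [map_sum, map_one] at h

theorem vertex_hd_mul_arrow (a : Q₁) :
    vertex V₀ Q₁ hd tl (hd a) * arrow V₀ Q₁ hd tl a = arrow V₀ Q₁ hd tl a := by
  have h := RingQuot.mkAlgHom_rel ℂ (PathAlgebraRel.head (hd := hd) (tl := tl) a)
  rwa [map_mul] at h

theorem arrow_mul_vertex_tl (a : Q₁) :
    arrow V₀ Q₁ hd tl a * vertex V₀ Q₁ hd tl (tl a) = arrow V₀ Q₁ hd tl a := by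
  have h := RingQuot.mkAlgHom_rel ℂ (PathAlgebraRel.tail (hd := hd) (tl := tl) a)
  rwa [map_mul] at h

theorem induction_on {P : PathAlgebra V₀ Q₁ hd tl → Prop} (x : PathAlgebra V₀ Q₁ hd tl)
    (algebraMap : ∀ r : ℂ, P (algebraMap ℂ _ r))
    (vertex : ∀ v, P (vertex V₀ Q₁ hd tl v)) (arrow : ∀ a, P (arrow V₀ Q₁ hd tl a))
    (add : ∀ x y, P x → P y → P (x + y)) (mul : ∀ x y, P x → P y → P (x * y)) : P x := by
  obtain ⟨x, rfl⟩ := RingQuot.mkAlgHom_surjective ℂ _ x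
  induction x using FreeAlgebra.induction with
  | grade0 r => rw [AlgHom.commutes]; exact algebraMap r
  | grade1 g => cases g with
    | inl v => exact vertex v
    | inr a => exact arrow a
  | mul x y hx hy => rw [map_mul]; exact mul _ _ hx hy
  | add x y hx hy => rw [map_add]; exact add _ _ hx hy

section Lift

variable {B : Type*} [Semiring B] [Algebra ℂ B] (e : V₀ → B) (x : Q₁ → B)
  (he : CompleteOrthogonalIdempotents e) (head : ∀ a, e (hd a) * x a = x a)
  (tail : ∀ a, x a * e (tl a) = x a)

noncomputable def lift : PathAlgebra V₀ Q₁ hd tl →ₐ[ℂ] B :=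
  RingQuot.liftAlgHom ℂ ⟨FreeAlgebra.lift ℂ (Sum.elim e x), fun _ _ h ↦ by
    induction h with
    | idem v => simpa using (he.idem v).eq
    | orth v w hvw => simpa using he.ortho hvw
    | sum_one => simpa using he.complete
    | head a => simpa using head a
    | tail a => simpa using tail a⟩

theorem lift_vertex (v : V₀) : lift e x he head tail (vertex V₀ Q₁ hd tl v) = e v :=
  (RingQuot.liftAlgHom_mkAlgHom_apply ℂ _ _ _).trans (by simp)

theorem lift_arrow (a : Q₁) : lift e x he head tail (arrow V₀ Q₁ hd tl a) = x a :=
  (RingQuot.liftAlgHom_mkAlgHom_apply ℂ _ _ _).trans (by simp)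

end Lift

section Star

open MulOpposite

variable {φV : V₀ → V₀} {φA : Q₁ → Q₁} (hφV : Function.Involutive φV)
  (hφA : Function.Involutive φA) (hcompat : ∀ a, hd (φA a) = φV (tl a)) (c : Q₁ → ℂ)

include hφV hφA hcompat in
omit [Fintype V₀] in
theorem tl_eq_of_hd_eq (a : Q₁) : tl (φA a) = φV (hd a) := by
  rw [← hφV (tl (φA a)), ← hcompat, hφA]

noncomputable def starOpHom : PathAlgebra V₀ Q₁ hd tl →ₐ[ℂ] (PathAlgebra V₀ Q₁ hd tl)ᵐᵒᵖ :=
  lift (fun v ↦ op (vertex V₀ Q₁ hd tl (φV v))) (fun a ↦ c a • op (arrow V₀ Q₁ hd tl (φA a)))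
    ((CompleteOrthogonalIdempotents.equiv (hφV.toPerm φV)).mpr
      completeOrthogonalIdempotents_vertex).op
    (fun a ↦ by rw [mul_smul_comm, ← op_mul, ← tl_eq_of_hd_eq hφV hφA hcompat, arrow_mul_vertex_tl])
    (fun a ↦ by rw [smul_mul_assoc, ← op_mul, ← hcompat, vertex_hd_mul_arrow])

noncomputable def starMap : PathAlgebra V₀ Q₁ hd tl →ₗ[ℂ] PathAlgebra V₀ Q₁ hd tl :=
  (opLinearEquiv ℂ).symm.toLinearMap ∘ₗ (starOpHom hφV hφA hcompat c).toLinearMap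

theorem starMap_mul (x y : PathAlgebra V₀ Q₁ hd tl) :
    starMap hφV hφA hcompat c (x * y) =
      starMap hφV hφA hcompat c y * starMap hφV hφA hcompat c x := by
  simp [starMap]

theorem starMap_algebraMap (r : ℂ) :
    starMap hφV hφA hcompat c (algebraMap ℂ _ r) = algebraMap ℂ (PathAlgebra V₀ Q₁ hd tl) r := by
  simp [starMap]

theorem starMap_vertex (v : V₀) :
    starMap hφV hφA hcompat c (vertex V₀ Q₁ hd tl v) = vertex V₀ Q₁ hd tl (φV v) :=
  congrArg unop (lift_vertex _ _ _ _ _ v)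

theorem starMap_arrow (a : Q₁) :
    starMap hφV hφA hcompat c (arrow V₀ Q₁ hd tl a) = c a • arrow V₀ Q₁ hd tl (φA a) :=
  congrArg unop (lift_arrow _ _ _ _ _ a)

end Star

section Involution

variable {φV : V₀ → V₀} {φA : Q₁ → Q₁} (hφV : Function.Involutive φV)
  (hφA : Function.Involutive φA) (hcompat : ∀ a, hd (φA a) = φV (tl a)) {c : Q₁ → ℂ}
  {ε : V₀ → ℂ} (hε : ∀ v, ε v * ε v = 1) (hc : ∀ a, c a * c (φA a) = ε (hd a) * ε (tl a))

include hε hc in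
theorem starMap_starMap (x : PathAlgebra V₀ Q₁ hd tl) :
    starMap hφV hφA hcompat c (starMap hφV hφA hcompat c x) =
      (∑ v, ε v • vertex V₀ Q₁ hd tl v) * x * (∑ v, ε v • vertex V₀ Q₁ hd tl v) := by
  have he := (completeOrthogonalIdempotents_vertex (Q₁ := Q₁) (hd := hd) (tl := tl))
  set E := ∑ v, ε v • vertex V₀ Q₁ hd tl v
  induction x using induction_on with
  | algebraMap r =>
    rw [starMap_algebraMap, starMap_algebraMap, ← Algebra.commutes, mul_assoc,
      he.sum_smul_mul_self hε, mul_one]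
  | vertex v =>
    rw [starMap_vertex, starMap_vertex, hφV, he.sum_smul_mul_of_mul_eq ε (he.idem v).eq,
      smul_mul_assoc, he.mul_sum_smul_of_mul_eq ε (he.idem v).eq, smul_smul, hε, one_smul]
  | arrow a =>
    rw [starMap_arrow, map_smul, starMap_arrow, hφA, smul_smul, hc,
      he.sum_smul_mul_of_mul_eq ε (vertex_hd_mul_arrow a), smul_mul_assoc,
      he.mul_sum_smul_of_mul_eq ε (arrow_mul_vertex_tl a), smul_smul]
  | add x y hx hy => rw [map_add, map_add, hx, hy, mul_add, add_mul]
  | mul x y hx hy =>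
    rw [starMap_mul, starMap_mul, hx, hy]
    simp only [mul_assoc]
    rw [← mul_assoc E E, he.sum_smul_mul_self hε, one_mul]

include hε hc in
theorem starMap_bijective : Function.Bijective (starMap hφV hφA hcompat c) := by
  have hE := (completeOrthogonalIdempotents_vertex (Q₁ := Q₁) (hd := hd) (tl := tl)
    ).sum_smul_mul_self hε
  have h := (involutive_mul_mul_of_mul_self_eq_one hE).bijective
  rw [← funext (starMap_starMap hφV hφA hcompat hε hc)] at h
  exact ⟨h.injective.of_comp, h.surjective.of_comp⟩

end Involution

end PathAlgebra

theorem pathAlgebra_antiautomorphism_exists_general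
    (V₀ Q₁ : Type) [Fintype V₀] (hd tl : Q₁ → V₀)
    (φV : V₀ → V₀) (φA : Q₁ → Q₁)
    (hφV : ∀ v, φV (φV v) = v) (hφA : ∀ a, φA (φA a) = a)
    (hcompat : ∀ a, hd (φA a) = φV (tl a))
    (ε : V₀ → ℂ) (σ : Q₁ → ℂ)
    (hεsign : ∀ v, ε v = 1 ∨ ε v = -1)
    (hε : ∀ v, ε v * ε (φV v) = 1) (hσa : ∀ a, σ a * σ (φA a) = 1) :
    ∃ star : PathAlgebra V₀ Q₁ hd tl ≃ₗ[ℂ] PathAlgebra V₀ Q₁ hd tl,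
      (∀ x y : PathAlgebra V₀ Q₁ hd tl, star (x * y) = star y * star x) ∧
      (∀ v : V₀, star (PathAlgebra.vertex V₀ Q₁ hd tl v)
          = PathAlgebra.vertex V₀ Q₁ hd tl (φV v)) ∧
      (∀ a : Q₁, star (PathAlgebra.arrow V₀ Q₁ hd tl a)
          = (σ a * ε (hd a)) • PathAlgebra.arrow V₀ Q₁ hd tl (φA a)) ∧
      (∀ x : PathAlgebra V₀ Q₁ hd tl,
        star (star x) = (∑ v : V₀, ε v • PathAlgebra.vertex V₀ Q₁ hd tl v) * x *
          (∑ v : V₀, ε v • PathAlgebra.vertex V₀ Q₁ hd tl v)) := by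
  have hε2 : ∀ v, ε v * ε v = 1 := fun v ↦ by rcases hεsign v with h | h <;> simp [h]
  have hεφ : ∀ v, ε (φV v) = ε v := fun v ↦ by
    linear_combination ε v * hε v - ε (φV v) * hε2 v
  have hc : ∀ a, σ a * ε (hd a) * (σ (φA a) * ε (hd (φA a))) = ε (hd a) * ε (tl a) := fun a ↦ by
    rw [hcompat, hεφ]
    linear_combination ε (hd a) * ε (tl a) * hσa a
  exact ⟨.ofBijective _ (PathAlgebra.starMap_bijective hφV hφA hcompat hε2 hc),
    PathAlgebra.starMap_mul hφV hφA hcompat _, PathAlgebra.starMap_vertex hφV hφA hcompat _,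
    PathAlgebra.starMap_arrow hφV hφA hcompat _, PathAlgebra.starMap_starMap hφV hφA hcompat hε2 hc⟩

/-- Let `Q` be a quiver with vertex involution `φV`, arrow involution `φA` satisfying
`hd (φA a) = φV (tl a)`, and sign maps `ε : Q₀ → {±1}`, `σ : Q₁ → {±1}` with
`ε_v ε_{φ(v)} = 1` and `σ_a σ_{φ(a)} = 1`.  Then `v ↦ φ(v)`,
`a ↦ σ_a ε_{h(a)} φ(a)` extends to a well-defined linear anti-automorphism `*` of the
path algebra `ℂQ` satisfying `x** = ε x ε` where `ε = Σ_v ε_v v`. -/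
theorem pathAlgebra_antiautomorphism_exists
    (V₀ Q₁ : Type) [Fintype V₀] (hd tl : Q₁ → V₀)
    (φV : V₀ → V₀) (φA : Q₁ → Q₁)
    (hφV : ∀ v, φV (φV v) = v) (hφA : ∀ a, φA (φA a) = a)
    (hcompat : ∀ a, hd (φA a) = φV (tl a))
    (ε : V₀ → ℂ) (σ : Q₁ → ℂ)
    (hεsign : ∀ v, ε v = 1 ∨ ε v = -1) (hσsign : ∀ a, σ a = 1 ∨ σ a = -1)
    (hε : ∀ v, ε v * ε (φV v) = 1) (hσa : ∀ a, σ a * σ (φA a) = 1) :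
    ∃ star : PathAlgebra V₀ Q₁ hd tl ≃ₗ[ℂ] PathAlgebra V₀ Q₁ hd tl,
      (∀ x y : PathAlgebra V₀ Q₁ hd tl, star (x * y) = star y * star x) ∧
      (∀ v : V₀, star (PathAlgebra.vertex V₀ Q₁ hd tl v)
          = PathAlgebra.vertex V₀ Q₁ hd tl (φV v)) ∧
      (∀ a : Q₁, star (PathAlgebra.arrow V₀ Q₁ hd tl a)
          = (σ a * ε (hd a)) • PathAlgebra.arrow V₀ Q₁ hd tl (φA a)) ∧
      (∀ x : PathAlgebra V₀ Q₁ hd tl,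
        star (star x) = (∑ v : V₀, ε v • PathAlgebra.vertex V₀ Q₁ hd tl v) * x *
          (∑ v : V₀, ε v • PathAlgebra.vertex V₀ Q₁ hd tl v)) :=
  pathAlgebra_antiautomorphism_exists_general V₀ Q₁ hd tl φV φA hφV hφA hcompat ε σ hεsign hε hσa
end

section
/- Consider the quiver with one vertex of dimension n ≥ 2 and k loops. Then dim Rep(Q,α) − dim GL_α + 1 = k n² − n² + 1 is the dimension of the quotient iss(Q,α) when simples exist; in particular, simple representations exist if and only if k ≥ 2 (for n ≥ 2), or n = 1. -/
/-!
For `n ≥ 2` a single matrix (or none) has an eigenvector over `ℂ`, whose span is a proper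
nonzero invariant subspace. Conversely, for `k ≥ 2` take `D = diag(0, …, n-1)` and the all-ones
matrix `J`. Lagrange interpolation gives, for each `j`, a polynomial in `D` mapping `x` to
`x j • e j`; so a nonzero subspace invariant under `D` contains some `e i`, hence
`J e i = (1, …, 1)`, hence every `e j`. For `n = 1` every tuple is simple.
-/

/-- A tuple of `n×n` matrices is a simple representation of the one-vertex quiver with
`k` loops iff the matrices have no common invariant subspace other than `⊥` and `⊤`
(and the space is nonzero). -/
def IsSimpleTuple (n k : ℕ) (A : Fin k → Matrix (Fin n) (Fin n) ℂ) : Prop :=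
  (⊥ : Submodule ℂ (Fin n → ℂ)) ≠ ⊤ ∧
  ∀ U : Submodule ℂ (Fin n → ℂ),
    (∀ i : Fin k, ∀ x ∈ U, (A i).mulVec x ∈ U) → U = ⊥ ∨ U = ⊤

open Matrix Polynomial

section DiagonalInvariant

variable {K ι : Type*} [Field K] [Fintype ι] [DecidableEq ι]

theorem aeval_toLin'_diagonal (d : ι → K) (p : K[X]) :
    aeval (toLin' (diagonal d)) p = toLin' (diagonal fun i ↦ p.eval (d i)) := by
  rw [show toLin' (diagonal d) = toLinAlgEquiv' (diagonalAlgHom K d) from rfl,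
    aeval_algHom_apply, aeval_algHom_apply, aeval_pi_apply]
  rfl

theorem single_apply_mem_of_diagonal_invariant {d : ι → K} (hd : Function.Injective d)
    {U : Submodule K (ι → K)} (hU : ∀ x ∈ U, diagonal d *ᵥ x ∈ U) {x : ι → K} (hx : x ∈ U)
    (j : ι) : Pi.single j (x j) ∈ U := by
  have hmem := aeval_apply_smul_mem_of_le_comap hx (Lagrange.basis Finset.univ d j)
    (toLin' (diagonal d)) (fun y hy ↦ hU y hy)
  rw [aeval_toLin'_diagonal, toLin'_apply] at hmem
  convert hmem using 1
  ext i
  rw [mulVec_diagonal]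
  rcases eq_or_ne i j with rfl | hij
  · simp [Lagrange.eval_basis_self hd.injOn (Finset.mem_univ _)]
  · simp [hij, Lagrange.eval_basis_of_ne hij.symm (Finset.mem_univ _)]

theorem eq_top_of_diagonal_invariant_of_ones_invariant {d : ι → K}
    (hd : Function.Injective d) {U : Submodule K (ι → K)} (hU : U ≠ ⊥)
    (hD : ∀ x ∈ U, diagonal d *ᵥ x ∈ U) (hJ : ∀ x ∈ U, of (fun _ _ ↦ (1 : K)) *ᵥ x ∈ U) :
    U = ⊤ := by
  obtain ⟨x, hxU, hx⟩ := Submodule.exists_mem_ne_zero_of_ne_bot hU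
  obtain ⟨i, hi⟩ := Function.ne_iff.mp hx
  have hei : Pi.single i 1 ∈ U := by
    simpa [← Pi.single_smul', inv_mul_cancel₀ hi] using
      U.smul_mem (x i)⁻¹ (single_apply_mem_of_diagonal_invariant hd hD hxU i)
  have hones : (fun _ ↦ 1 : ι → K) ∈ U := by
    convert hJ _ hei using 1
    ext
    simp [mulVec_single]
  have hbasis : ∀ j, Pi.basisFun K ι j ∈ U := fun j ↦ by
    simpa using single_apply_mem_of_diagonal_invariant hd hD hones j
  rw [eq_top_iff, ← (Pi.basisFun K ι).span_eq, Submodule.span_le]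
  exact Set.range_subset_iff.mpr hbasis

end DiagonalInvariant

theorem exists_common_eigenvector_of_subsingleton {K ι σ : Type*} [Field K] [IsAlgClosed K]
    [Fintype σ] [DecidableEq σ] [Nonempty σ] [Subsingleton ι] (A : ι → Matrix σ σ K) :
    ∃ v ≠ 0, ∀ i, ∃ μ : K, A i *ᵥ v = μ • v := by
  cases isEmpty_or_nonempty ι with
  | inl _ => exact ⟨1, one_ne_zero, isEmptyElim⟩
  | inr h =>
    obtain ⟨i₀⟩ := h
    obtain ⟨μ, hμ⟩ := Module.End.exists_eigenvalue (toLin' (A i₀))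
    obtain ⟨v, hv⟩ := hμ.exists_hasEigenvector
    exact ⟨v, hv.2, fun i ↦ ⟨μ, Subsingleton.elim i₀ i ▸ hv.apply_eq_smul⟩⟩

namespace IsSimpleTuple

variable {n k : ℕ} {A : Fin k → Matrix (Fin n) (Fin n) ℂ}

theorem ne_zero (h : IsSimpleTuple n k A) : n ≠ 0 := by
  rintro rfl
  exact h.1 (Subsingleton.elim _ _)

theorem le_one_of_common_eigenvector (h : IsSimpleTuple n k A) {v : Fin n → ℂ} (hv : v ≠ 0)
    (hA : ∀ i, ∃ μ : ℂ, A i *ᵥ v = μ • v) : n ≤ 1 := by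
  have hinv : ∀ i, ∀ x ∈ (ℂ ∙ v), A i *ᵥ x ∈ (ℂ ∙ v) := by
    intro i x hx
    obtain ⟨c, rfl⟩ := Submodule.mem_span_singleton.mp hx
    obtain ⟨μ, hμ⟩ := hA i
    rw [mulVec_smul, hμ, smul_smul]
    exact Submodule.smul_mem _ _ (Submodule.mem_span_singleton_self v)
  rcases h.2 _ hinv with hbot | htop
  · exact absurd (Submodule.span_singleton_eq_bot.mp hbot) hv
  · have hline := finrank_span_singleton (K := ℂ) hv
    rw [htop, finrank_top, Module.finrank_fin_fun] at hline
    omega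

theorem two_le_k_of_two_le_n (h : IsSimpleTuple n k A) (hn : 2 ≤ n) : 2 ≤ k := by
  by_contra hk
  have : Subsingleton (Fin k) := Fin.subsingleton_iff_le_one.mpr (by omega)
  have : NeZero n := ⟨h.ne_zero⟩
  obtain ⟨v, hv, hAv⟩ := exists_common_eigenvector_of_subsingleton A
  have := h.le_one_of_common_eigenvector hv hAv
  omega

end IsSimpleTuple

theorem isSimpleTuple_one {k : ℕ} (A : Fin k → Matrix (Fin 1) (Fin 1) ℂ) :
    IsSimpleTuple 1 k A := by
  have := is_simple_module_of_finrank_eq_one (K := ℂ) (A := ℂ) (V := Fin 1 → ℂ) (by simp)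
  exact ⟨bot_ne_top, fun U _ ↦ eq_bot_or_eq_top U⟩

theorem exists_isSimpleTuple {n k : ℕ} [NeZero n] (hk : 2 ≤ k) :
    ∃ A : Fin k → Matrix (Fin n) (Fin n) ℂ, IsSimpleTuple n k A := by
  refine ⟨fun m ↦ if (m : ℕ) = 0 then diagonal (fun i ↦ ((i : ℕ) : ℂ)) else of fun _ _ ↦ 1,
    bot_ne_top, fun U hU ↦ or_iff_not_imp_left.mpr fun hne ↦ ?_⟩
  refine eq_top_of_diagonal_invariant_of_ones_invariant (d := fun i : Fin n ↦ ((i : ℕ) : ℂ))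
    (Nat.cast_injective.comp Fin.val_injective) hne ?_ ?_
  · simpa using hU ⟨0, by omega⟩
  · simpa using hU ⟨1, by omega⟩

/-- For the quiver with one vertex of dimension `n` and `k` loops:
`dim Rep(Q,α) − dim GL_α + 1 = k n² − n² + 1` (the dimension of the quotient `iss(Q,α)`
when simples exist), and simple representations exist if and only if `n = 1`, or
`n ≥ 2` and `k ≥ 2`. -/
theorem one_vertex_loops_simples_iff (n k : ℕ) :
    (Module.finrank ℂ (Fin k → Matrix (Fin n) (Fin n) ℂ) -
        Module.finrank ℂ (Matrix (Fin n) (Fin n) ℂ) + 1 = k * n ^ 2 - n ^ 2 + 1) ∧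
    ((∃ A : Fin k → Matrix (Fin n) (Fin n) ℂ, IsSimpleTuple n k A) ↔
      (n = 1 ∨ (2 ≤ n ∧ 2 ≤ k))) := by
  refine ⟨by simp [Module.finrank_pi_fintype, Module.finrank_matrix, sq], ⟨fun ⟨A, hA⟩ ↦ ?_, ?_⟩⟩
  · obtain h1 | h2 : n = 1 ∨ 2 ≤ n := by have := hA.ne_zero; omega
    · exact Or.inl h1
    · exact Or.inr ⟨h2, hA.two_le_k_of_two_le_n h2⟩
  · rintro (rfl | ⟨hn, hk⟩)
    · exact ⟨0, isSimpleTuple_one 0⟩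
    · have : NeZero n := ⟨by omega⟩
      exact exists_isSimpleTuple hk
end

section
/- Let V ≅ W ⊕ W' be a module over an algebra A with anti-automorphism * (x** = εxε), equipped with an ε-commuting *-compatible nondegenerate bilinear form, where W, W' are simple submodules with W ⊆ W⊥ and W' ⊆ W'⊥, and W ≅ W' as A-modules. Suppose V has no proper nonzero nondegenerate submodule. Identifying V = W ⊕ W via the isomorphism, there is a nondegenerate bilinear form ⟨,⟩₁ on W with ⟨(v,v'),(w,w')⟩_V = ⟨v,w'⟩₁ + ⟨w, εv'⟩₁, and ⟨,⟩₁ is (−ε)-commuting: ⟨v,w⟩₁ = −⟨w, εv⟩₁. -/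
/-!
Restricting `BV` to the two isotropic copies of `W` gives the forms
`B₁ v w' = BV (v, 0) (0, w')` and `C v' w = BV (0, v') (w, 0)`, and `ε`-commutation gives
`C v' w = B₁ w (ε • v')`. Both are `σ`-compatible and `B₁` is nondegenerate, so `B₁⁻¹ ∘ C` is an
`A`-endomorphism of the simple module `W`, hence a scalar `c` by Schur's lemma. On the diagonal
`{(v, v)}`, a proper nonzero submodule and therefore degenerate, `BV` restricts to `(1 + c) • B₁`;
this forces `c = -1`.
-/

def IsStarCompatible {K A M N : Type*} [CommRing K] [AddCommGroup M] [AddCommGroup N]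
    [Module K M] [Module K N] [SMul A M] [SMul A N] (σ : A → A) (B : M →ₗ[K] N →ₗ[K] K) :
    Prop :=
  ∀ (x : A) (v : M) (w : N), B (x • v) w = B v (σ x • w)

section Prod

variable {K M N : Type*} [CommRing K] [AddCommGroup M] [AddCommGroup N] [Module K M]
  [Module K N]

theorem apply_prod_eq_add_of_isotropic {B : (M × N) →ₗ[K] (M × N) →ₗ[K] K}
    (hM : ∀ v w : M, B (v, 0) (w, 0) = 0) (hN : ∀ v w : N, B (0, v) (0, w) = 0)
    (v w : M) (v' w' : N) :
    B (v, v') (w, w') = B (v, 0) (0, w') + B (0, v') (w, 0) := by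
  have hv : ((v, v') : M × N) = (v, 0) + (0, v') := by simp
  have hw : ((w, w') : M × N) = (w, 0) + (0, w') := by simp
  rw [hv, hw]
  simp only [map_add, LinearMap.add_apply, hM, hN]
  ring

theorem separatingLeft_compl₁₂_inl_inr_of_isotropic
    {B : (M × N) →ₗ[K] (M × N) →ₗ[K] K} (hB : B.SeparatingLeft)
    (hM : ∀ v w : M, B (v, 0) (w, 0) = 0) :
    (B.compl₁₂ (LinearMap.inl K M N) (LinearMap.inr K M N)).SeparatingLeft := by
  intro v hv
  have hv0 : ((v, 0) : M × N) = 0 := hB _ fun ⟨w, w'⟩ ↦ by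
    rw [← add_zero w, ← zero_add w', ← Prod.mk_add_mk, map_add, hM, zero_add]
    exact hv w'
  exact congrArg Prod.fst hv0

end Prod

theorem IsStarCompatible.compl₁₂ {K A M N P Q : Type*} [CommRing K] [Ring A] [Algebra K A]
    [AddCommGroup M] [AddCommGroup N] [AddCommGroup P] [AddCommGroup Q]
    [Module K M] [Module K N] [Module K P] [Module K Q]
    [Module A M] [Module A N] [Module A P] [Module A Q]
    [IsScalarTower K A M] [IsScalarTower K A N] [IsScalarTower K A P] [IsScalarTower K A Q]
    {σ : A → A} {B : M →ₗ[K] N →ₗ[K] K} (hB : IsStarCompatible σ B)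
    (f : P →ₗ[A] M) (g : Q →ₗ[A] N) :
    IsStarCompatible σ (B.compl₁₂ (f.restrictScalars K) (g.restrictScalars K)) := by
  intro x v w
  simp only [LinearMap.compl₁₂_apply, LinearMap.restrictScalars_apply, map_smul]
  exact hB x (f v) (g w)

theorem IsStarCompatible.exists_eq_smul {K A W : Type*} [Field K] [IsAlgClosed K] [Ring A]
    [Algebra K A] [AddCommGroup W] [Module K W] [Module A W] [IsScalarTower K A W]
    [FiniteDimensional K W] [IsSimpleModule A W] {σ : A → A} {B C : W →ₗ[K] W →ₗ[K] K}
    (hB : B.SeparatingLeft) (hBσ : IsStarCompatible σ B) (hCσ : IsStarCompatible σ C) :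
    ∃ c : K, C = c • B := by
  -- `B` identifies `W` with its dual; `C` read through that identification commutes with `A`.
  let e : W ≃ₗ[K] Module.Dual K W := B.linearEquivOfInjective
    (LinearMap.ker_eq_bot.mp (LinearMap.separatingLeft_iff_ker_eq_bot.mp hB))
    Subspace.dual_finrank_eq.symm
  have he : ∀ v, e v = B v := fun _ ↦ rfl
  let T : Module.End A W :=
    { toFun := fun v ↦ e.symm (C v)
      map_add' := by simp
      map_smul' := fun x v ↦ e.injective <| by
        ext w
        rw [RingHom.id_apply, LinearEquiv.apply_symm_apply, he, hBσ, ← he,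
          LinearEquiv.apply_symm_apply, hCσ] }
  obtain ⟨c, hc⟩ := (IsSimpleModule.algebraMap_end_bijective_of_isAlgClosed K).2 T
  refine ⟨c, LinearMap.ext₂ fun v w ↦ ?_⟩
  have hTv : e.symm (C v) = c • v := (congrArg (· v) hc).symm
  rw [← e.apply_symm_apply (C v), hTv, he]
  simp

namespace Submodule

variable (A M : Type*) [Ring A] [AddCommGroup M] [Module A M]

def diagonal : Submodule A (M × M) where
  carrier := Set.diagonal M
  add_mem' := by simp_all [Set.mem_diagonal_iff]
  zero_mem' := rfl
  smul_mem' := by simp_all [Set.mem_diagonal_iff]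

variable {A M} [Nontrivial M]

theorem diagonal_ne_bot : diagonal A M ≠ ⊥ := by
  obtain ⟨u, hu⟩ := exists_ne (0 : M)
  exact (Submodule.ne_bot_iff _).2 ⟨(u, u), rfl, by simpa using hu⟩

theorem diagonal_ne_top : diagonal A M ≠ ⊤ := fun h ↦ by
  obtain ⟨u, hu⟩ := exists_ne (0 : M)
  exact hu (h ▸ mem_top : (u, (0 : M)) ∈ diagonal A M)

end Submodule

theorem symplectic_epsilon_simple_gives_minus_epsilon_form_general
    (A : Type*) [Ring A] [Algebra ℂ A]
    (σ : A ≃ₗ[ℂ] A)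
    (ε : A)
    (W : Type*) [AddCommGroup W] [Module ℂ W] [Module A W] [IsScalarTower ℂ A W]
    [FiniteDimensional ℂ W] [IsSimpleModule A W]
    (BV : (W × W) →ₗ[ℂ] (W × W) →ₗ[ℂ] ℂ)
    (hnd : ∀ v : W × W, (∀ w : W × W, BV v w = 0) → v = 0)
    (hcomm : ∀ v w : W × W, BV v w = BV w (ε • v))
    (hstar : ∀ (x : A) (v w : W × W), BV (x • v) w = BV v (σ x • w))
    (hiso1 : ∀ v w : W, BV (v, 0) (w, 0) = 0)
    (hiso2 : ∀ v w : W, BV (0, v) (0, w) = 0)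
    (hepsimple : ∀ U : Submodule A (W × W), U ≠ ⊥ → U ≠ ⊤ →
      ∃ v ∈ U, v ≠ 0 ∧ ∀ w ∈ U, BV v w = 0) :
    ∃ B₁ : W →ₗ[ℂ] W →ₗ[ℂ] ℂ,
      (∀ v : W, (∀ w : W, B₁ v w = 0) → v = 0) ∧
      (∀ v v' w w' : W, BV (v, v') (w, w') = B₁ v w' + B₁ w (ε • v')) ∧
      (∀ v w : W, B₁ v w = -B₁ w (ε • v)) := by
  have : Nontrivial W := IsSimpleModule.nontrivial A W
  have hBVσ : IsStarCompatible σ BV := hstar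
  set B₁ := BV.compl₁₂
    ((LinearMap.inl A W W).restrictScalars ℂ) ((LinearMap.inr A W W).restrictScalars ℂ)
  set C := BV.compl₁₂
    ((LinearMap.inr A W W).restrictScalars ℂ) ((LinearMap.inl A W W).restrictScalars ℂ)
  have hB₁ : B₁.SeparatingLeft := separatingLeft_compl₁₂_inl_inr_of_isotropic hnd hiso1
  have hC : ∀ v w, C v w = B₁ w (ε • v) := fun v w ↦ by
    change BV (0, v) (w, 0) = BV (w, 0) (0, ε • v)
    rw [hcomm, Prod.smul_mk, smul_zero]
  obtain ⟨c, hc⟩ : ∃ c : ℂ, C = c • B₁ := (hBVσ.compl₁₂ _ _).exists_eq_smul hB₁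
    (hBVσ.compl₁₂ _ _)
  have hcB : ∀ v w, C v w = c * B₁ v w := fun v w ↦ by rw [hc]; rfl
  have hc_neg : c = -1 := by
    obtain ⟨⟨u, u'⟩, (rfl : u = u'), hu, hdeg⟩ := hepsimple _ Submodule.diagonal_ne_bot
      Submodule.diagonal_ne_top
    obtain ⟨w, hw⟩ : ∃ w, B₁ u w ≠ 0 := by
      by_contra! h
      exact hu (by rw [hB₁ u h]; rfl)
    have hdiag := hdeg (w, w) rfl
    rw [apply_prod_eq_add_of_isotropic hiso1 hiso2] at hdiag
    change B₁ u w + C u w = 0 at hdiag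
    rw [hcB] at hdiag
    exact eq_neg_of_add_eq_zero_left (mul_right_cancel₀ hw (by linear_combination hdiag))
  refine ⟨B₁, hB₁, fun v v' w w' ↦ ?_, fun v w ↦ ?_⟩
  · rw [apply_prod_eq_add_of_isotropic hiso1 hiso2, ← hC]
    rfl
  · rw [← hC, hcB, hc_neg, neg_one_mul, neg_neg]

/-- Symplectic-to-orthogonal correspondence, part (1).  Let `V = W ⊕ W` (two copies of a
simple module `W`, identified via the isomorphism `W ≅ W'`), carrying an `ε`-commuting
`*`-compatible nondegenerate bilinear form for which both copies of `W` are isotropic,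
and suppose `V` has no proper nonzero nondegenerate submodule.  Then there is a
nondegenerate bilinear form `⟨,⟩₁` on `W` with
`⟨(v,v'),(w,w')⟩_V = ⟨v,w'⟩₁ + ⟨w, εv'⟩₁`, and `⟨,⟩₁` is `(−ε)`-commuting:
`⟨v,w⟩₁ = −⟨w, εv⟩₁`. -/
theorem symplectic_epsilon_simple_gives_minus_epsilon_form
    (A : Type*) [Ring A] [Algebra ℂ A]
    (σ : A ≃ₗ[ℂ] A) (hσ : ∀ x y : A, σ (x * y) = σ y * σ x)
    (ε : A) (hεunit : IsUnit ε) (hε2 : ε * ε = 1)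
    (hσσ : ∀ x : A, σ (σ x) = ε * x * ε)
    (W : Type*) [AddCommGroup W] [Module ℂ W] [Module A W] [IsScalarTower ℂ A W]
    [FiniteDimensional ℂ W] [IsSimpleModule A W]
    (BV : (W × W) →ₗ[ℂ] (W × W) →ₗ[ℂ] ℂ)
    (hnd : ∀ v : W × W, (∀ w : W × W, BV v w = 0) → v = 0)
    (hcomm : ∀ v w : W × W, BV v w = BV w (ε • v))
    (hstar : ∀ (x : A) (v w : W × W), BV (x • v) w = BV v (σ x • w))
    (hiso1 : ∀ v w : W, BV (v, 0) (w, 0) = 0)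
    (hiso2 : ∀ v w : W, BV (0, v) (0, w) = 0)
    (hepsimple : ∀ U : Submodule A (W × W), U ≠ ⊥ → U ≠ ⊤ →
      ∃ v ∈ U, v ≠ 0 ∧ ∀ w ∈ U, BV v w = 0) :
    ∃ B₁ : W →ₗ[ℂ] W →ₗ[ℂ] ℂ,
      (∀ v : W, (∀ w : W, B₁ v w = 0) → v = 0) ∧
      (∀ v v' w w' : W, BV (v, v') (w, w') = B₁ v w' + B₁ w (ε • v')) ∧
      (∀ v w : W, B₁ v w = -B₁ w (ε • v)) :=
  symplectic_epsilon_simple_gives_minus_epsilon_form_general A σ ε W BV hnd hcomm hstar hiso1 hiso2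
    hepsimple
end

section
/- Let A be an algebra with anti-automorphism * satisfying x** = εxε, and let V = W ⊕ W* be a module with *-compatible ε-commuting nondegenerate pairing where W is simple, W ≇ W* as A-modules, and dim(vW) = dim(vW*) for every central idempotent v. Then W admits a nondegenerate symmetric bilinear form ⟨,⟩_W that is compatible with the degree-zero part of the algebra (⟨xv,w⟩ = ⟨v,x*w⟩ for x central idempotents), but W is not isomorphic to any module carrying a fully *-compatible such form. -/
/-!
A central idempotent `x`, and with it `σ x`, acts on the simple module `W` as `0` or as the
identity, and through the pairing `x` acts on `W*` as the transpose of `σ x` on `W`. The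
hypothesis `dim (x W) = dim (x W*)` therefore forces `x` and `σ x` to act on `W` by the same
scalar, so every nondegenerate symmetric form on `W` is compatible with the central idempotents.
A nondegenerate form `B` compatible with all of `A`, on the other hand, would make `v ↦ B v` an
`A`-linear isomorphism `W ≃ W*`.
-/

open Function

theorem IsSimpleModule.smul_eq_zero_or_smul_eq_self {A : Type*} (M : Type*) [Ring A]
    [AddCommGroup M] [Module A M] [IsSimpleModule A M] {x : A} (hx : x ∈ Set.center A)
    (hxi : IsIdempotentElem x) : (∀ v : M, x • v = 0) ∨ ∀ v : M, x • v = v := by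
  classical
  have h : IsIdempotentElem (Module.End.smulLeft x hx : Module.End A M) := by
    ext v; simp [smul_smul, hxi.eq]
  rcases IsIdempotentElem.iff_eq_zero_or_one.mp h with h0 | h1
  · exact .inl fun v => by simpa using LinearMap.congr_fun h0 v
  · exact .inr fun v => by simpa using LinearMap.congr_fun h1 v

theorem mem_center_of_surjective_antimul {A : Type*} [Semigroup A] {σ : A → A}
    (hσs : Surjective σ) (hσ : ∀ x y, σ (x * y) = σ y * σ x) {x : A}
    (hx : x ∈ Set.center A) : σ x ∈ Set.center A := by
  rw [Semigroup.mem_center_iff] at hx ⊢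
  intro g
  obtain ⟨g, rfl⟩ := hσs g
  rw [← hσ, ← hσ, hx]

section SpanImageSMul

variable {R A M : Type*} [Semiring R] [AddCommMonoid M] [Module R M] [SMul A M] {x : A}

theorem span_image_smul_eq_top (h : ∀ v : M, x • v = v) :
    Submodule.span R ((x • ·) '' (Set.univ : Set M)) = ⊤ := by
  rw [show (x • · : M → M) = id from funext h, Set.image_id, Submodule.span_univ]

theorem span_image_smul_eq_bot (h : ∀ v : M, x • v = 0) :
    Submodule.span R ((x • ·) '' (Set.univ : Set M)) = ⊥ :=
  Submodule.span_eq_bot.2 (by rintro _ ⟨v, -, rfl⟩; exact h v)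

end SpanImageSMul

theorem smul_eq_of_transpose {K A W W' : Type*} [Field K] [AddCommGroup W] [Module K W]
    [AddCommGroup W'] [Module K W'] [SMul A W] [SMul A W'] {p : W' →ₗ[K] W →ₗ[K] K}
    (hp : Injective p) {a b : A} (hab : ∀ f v, p (a • f) v = p f (b • v)) {c : K}
    (hb : ∀ v : W, b • v = c • v) (f : W') : a • f = c • f :=
  hp (LinearMap.ext fun v => by simp [hab, hb])

theorem exists_separatingLeft_symm_bilinear (K W : Type*) [Field K] [AddCommGroup W] [Module K W]
    [FiniteDimensional K W] :
    ∃ B : W →ₗ[K] W →ₗ[K] K, B.SeparatingLeft ∧ ∀ v w, B v w = B w v := by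
  classical
  let b := Module.finBasis K W
  have hsymm : b.toDual.flip = b.toDual :=
    b.ext fun i => b.ext fun j => by simp [b.toDual_apply, eq_comm]
  exact ⟨b.toDual, fun v hv => b.toDual_inj v (LinearMap.ext hv),
    fun v w => LinearMap.congr_fun₂ hsymm w v⟩

section DualModule

variable {K A W W' : Type*} [Field K] [Ring A]
  [AddCommGroup W] [Module K W] [Module A W] [FiniteDimensional K W]
  [AddCommGroup W'] [Module K W'] [Module A W']
  (σ : A → A) (p : W' →ₗ[K] W →ₗ[K] K) [p.IsPerfPair]

theorem exists_smul_eq_smul_and_smul_eq_smul [FiniteDimensional K W'] [IsSimpleModule A W]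
    (hσs : Surjective σ) (hσ : ∀ x y, σ (x * y) = σ y * σ x)
    (hpdual : ∀ (x : A) (f : W') (v : W), p (x • f) v = p f (σ x • v))
    {x : A} (hx : x ∈ Set.center A) (hxi : IsIdempotentElem x)
    (hdim : Module.finrank K (Submodule.span K ((x • ·) '' (Set.univ : Set W))) =
      Module.finrank K (Submodule.span K ((x • ·) '' (Set.univ : Set W')))) :
    ∃ c : K, (∀ v : W, x • v = c • v) ∧ ∀ v : W, σ x • v = c • v := by
  have hσx : σ x ∈ Set.center A := mem_center_of_surjective_antimul hσs hσ hx
  have hσxi : IsIdempotentElem (σ x) := by rw [IsIdempotentElem, ← hσ, hxi.eq]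
  have hp : Injective p := (LinearMap.IsPerfPair.bijective_left p).injective
  have hrank : Module.finrank K W' = Module.finrank K W := Module.finrank_of_isPerfPair p
  have hpos : 0 < Module.finrank K W :=
    have := IsSimpleModule.nontrivial A W
    Module.finrank_pos
  -- In the two mixed cases one of `x W`, `x W*` is zero and the other is everything.
  rcases IsSimpleModule.smul_eq_zero_or_smul_eq_self W hx hxi with hx0 | hx1 <;>
    rcases IsSimpleModule.smul_eq_zero_or_smul_eq_self W hσx hσxi with hs0 | hs1
  · exact ⟨0, by simpa using hx0, by simpa using hs0⟩
  · have hxW' : ∀ f : W', x • f = f := by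
      simpa using smul_eq_of_transpose hp (hpdual x) (c := 1) (by simpa using hs1)
    rw [span_image_smul_eq_bot hx0, span_image_smul_eq_top hxW', finrank_bot, finrank_top] at hdim
    omega
  · have hxW' : ∀ f : W', x • f = 0 := by
      simpa using smul_eq_of_transpose hp (hpdual x) (c := 0) (by simpa using hs0)
    rw [span_image_smul_eq_top hx1, span_image_smul_eq_bot hxW', finrank_bot, finrank_top] at hdim
    omega
  · exact ⟨1, by simpa using hx1, by simpa using hs1⟩

theorem nonempty_linearEquiv_dual_of_invariant_form
    (hpdual : ∀ (x : A) (f : W') (v : W), p (x • f) v = p f (σ x • v))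
    {B : W →ₗ[K] W →ₗ[K] K} (hB : B.SeparatingLeft)
    (hBσ : ∀ (x : A) (v w : W), B (x • v) w = B v (σ x • w)) :
    Nonempty (W ≃ₗ[A] W') := by
  let e : W ≃ₗ[K] W' :=
    (B.linearEquivOfInjective
      (LinearMap.ker_eq_bot.1 (LinearMap.separatingLeft_iff_ker_eq_bot.1 hB))
      Subspace.dual_finrank_eq.symm).trans p.toPerfPair.symm
  have he : ∀ v w, p (e v) w = B v w := fun v w => by simp [e]
  refine ⟨{ e with map_smul' := fun x v => p.toPerfPair.injective (LinearMap.ext fun w => ?_) }⟩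
  simp [he, hBσ, hpdual]

end DualModule

theorem general_epsilon_simple_almost_mixed_not_mixed_general
    (A : Type*) [Ring A] [Algebra ℂ A]
    (σ : A ≃ₗ[ℂ] A) (hσ : ∀ x y : A, σ (x * y) = σ y * σ x)
    (W : Type*) [AddCommGroup W] [Module ℂ W] [Module A W]
    [FiniteDimensional ℂ W] [IsSimpleModule A W]
    (W' : Type*) [AddCommGroup W'] [Module ℂ W'] [Module A W']
    [FiniteDimensional ℂ W']
    -- `W'` is the dual module of `W`:
    (p : W' →ₗ[ℂ] W →ₗ[ℂ] ℂ)
    (hp1 : ∀ f : W', (∀ v : W, p f v = 0) → f = 0)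
    (hp2 : ∀ v : W, (∀ f : W', p f v = 0) → v = 0)
    (hpdual : ∀ (x : A) (f : W') (v : W), p (x • f) v = p f (σ x • v))
    -- `W ≇ W*` as `A`-modules:
    (hnoniso : ¬ Nonempty (W ≃ₗ[A] W'))
    -- `dim (x • W) = dim (x • W*)` for every central idempotent `x`:
    (hdim : ∀ x ∈ Set.center A, IsIdempotentElem x →
      Module.finrank ℂ (Submodule.span ℂ ((x • ·) '' (Set.univ : Set W))) =
        Module.finrank ℂ (Submodule.span ℂ ((x • ·) '' (Set.univ : Set W')))) :
    (∃ BW : W →ₗ[ℂ] W →ₗ[ℂ] ℂ,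
      (∀ v : W, (∀ w : W, BW v w = 0) → v = 0) ∧
      (∀ v w : W, BW v w = BW w v) ∧
      (∀ x ∈ Set.center A, IsIdempotentElem x →
        ∀ v w : W, BW (x • v) w = BW v (σ x • w))) ∧
    ¬ ∃ B' : W →ₗ[ℂ] W →ₗ[ℂ] ℂ,
      (∀ v : W, (∀ w : W, B' v w = 0) → v = 0) ∧
      (∀ v w : W, B' v w = B' w v) ∧
      (∀ (x : A) (v w : W), B' (x • v) w = B' v (σ x • w)) := by
  have : p.IsPerfPair := .of_injective
    (LinearMap.ker_eq_bot.1 (LinearMap.separatingLeft_iff_ker_eq_bot.1 hp1))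
    (LinearMap.ker_eq_bot.1 (LinearMap.separatingRight_iff_flip_ker_eq_bot.1 hp2))
  refine ⟨?_, ?_⟩
  · obtain ⟨B, hBsep, hBsymm⟩ := exists_separatingLeft_symm_bilinear ℂ W
    refine ⟨B, hBsep, hBsymm, fun x hx hxi v w => ?_⟩
    obtain ⟨c, hxc, hσxc⟩ := exists_smul_eq_smul_and_smul_eq_smul σ p σ.surjective hσ hpdual
      hx hxi (hdim x hx hxi)
    simp [hxc, hσxc]
  · rintro ⟨B, hBsep, -, hBσ⟩
    exact hnoniso (nonempty_linearEquiv_dual_of_invariant_form σ p hpdual hBsep hBσ)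

/-- Symplectic-to-orthogonal correspondence, part (2): the general ε-simple case.
Let `V = W ⊕ W*` (`W` simple, `W* ` the dual module, here `W'` with a perfect pairing
`p` satisfying `p (x • f) v = p f (σ x • v)`), with a `*`-compatible `ε`-commuting
nondegenerate pairing, `W ≇ W*` as `A`-modules, and `dim (x • W) = dim (x • W*)` for
every central idempotent `x`.  Then `W` admits a nondegenerate symmetric bilinear form
compatible with the central idempotents (`⟨x v, w⟩ = ⟨v, x* w⟩`), but `W` carries no
nondegenerate symmetric form that is fully `*`-compatible. -/
theorem general_epsilon_simple_almost_mixed_not_mixed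
    (A : Type*) [Ring A] [Algebra ℂ A]
    (σ : A ≃ₗ[ℂ] A) (hσ : ∀ x y : A, σ (x * y) = σ y * σ x)
    (ε : A) (hεunit : IsUnit ε) (hε2 : ε * ε = 1)
    (hσσ : ∀ x : A, σ (σ x) = ε * x * ε)
    (W : Type*) [AddCommGroup W] [Module ℂ W] [Module A W] [IsScalarTower ℂ A W]
    [FiniteDimensional ℂ W] [IsSimpleModule A W]
    (W' : Type*) [AddCommGroup W'] [Module ℂ W'] [Module A W'] [IsScalarTower ℂ A W']
    [FiniteDimensional ℂ W']
    -- `W'` is the dual module of `W`: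
    (p : W' →ₗ[ℂ] W →ₗ[ℂ] ℂ)
    (hp1 : ∀ f : W', (∀ v : W, p f v = 0) → f = 0)
    (hp2 : ∀ v : W, (∀ f : W', p f v = 0) → v = 0)
    (hpdual : ∀ (x : A) (f : W') (v : W), p (x • f) v = p f (σ x • v))
    -- `W ≇ W*` as `A`-modules:
    (hnoniso : ¬ Nonempty (W ≃ₗ[A] W'))
    -- the hyperbolic `ε`-mixed structure on `V = W ⊕ W*`:
    (BV : (W × W') →ₗ[ℂ] (W × W') →ₗ[ℂ] ℂ)
    (hnd : ∀ v : W × W', (∀ w : W × W', BV v w = 0) → v = 0)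
    (hcomm : ∀ v w : W × W', BV v w = BV w (ε • v))
    (hstar : ∀ (x : A) (v w : W × W'), BV (x • v) w = BV v (σ x • w))
    -- `dim (x • W) = dim (x • W*)` for every central idempotent `x`:
    (hdim : ∀ x ∈ Set.center A, IsIdempotentElem x →
      Module.finrank ℂ (Submodule.span ℂ ((x • ·) '' (Set.univ : Set W))) =
        Module.finrank ℂ (Submodule.span ℂ ((x • ·) '' (Set.univ : Set W')))) :
    (∃ BW : W →ₗ[ℂ] W →ₗ[ℂ] ℂ,
      (∀ v : W, (∀ w : W, BW v w = 0) → v = 0) ∧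
      (∀ v w : W, BW v w = BW w v) ∧
      (∀ x ∈ Set.center A, IsIdempotentElem x →
        ∀ v w : W, BW (x • v) w = BW v (σ x • w))) ∧
    ¬ ∃ B' : W →ₗ[ℂ] W →ₗ[ℂ] ℂ,
      (∀ v : W, (∀ w : W, B' v w = 0) → v = 0) ∧
      (∀ v w : W, B' v w = B' w v) ∧
      (∀ (x : A) (v w : W), B' (x • v) w = B' v (σ x • w)) :=
  general_epsilon_simple_almost_mixed_not_mixed_general A σ hσ W W' p hp1 hp2 hpdual hnoniso hdim
end
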